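/- arXiv:0707.3627 — 2 statements merged into one kernel-verified Lean document; each statement's English description precedes it below -/
import Mathlib

section
/- Assume k is infinite. Then every nonzero H-stable two-sided ideal I of R is generated by monomials: every monomial x^s appearing with nonzero coefficient in some element of I belongs to I, and I is generated as a two-sided ideal of R by the set of monomials x^s (s ∈ ℕ^n) that it contains. -/
/-!
Common setup: `q`-commutative power series ring `R = k_q[[x_1,…,x_n]]` and
`q`-commutative Laurent series ring `L = k_q[[x_1^{±1},…,x_n^{±1}]]`, characterized
by their coefficient descriptions (twisted convolution multiplication).
-/

noncomputable section

/-- A multiplicatively antisymmetric `n × n` matrix over `k`: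
`q_{ii} = 1` and `q_{ij} q_{ji} = 1`. -/
structure QMatrix (k : Type*) [Field k] (n : ℕ) where
  q : Fin n → Fin n → k
  diag : ∀ i, q i i = 1
  antisym : ∀ i j, q i j * q j i = 1

namespace QMatrix

variable {k : Type*} [Field k] {n : ℕ} (Q : QMatrix k n)

lemma q_ne_zero (i j : Fin n) : Q.q i j ≠ 0 := fun h0 => by
  have h1 := Q.antisym i j
  rw [h0, zero_mul] at h1
  exact zero_ne_one h1

/-- The twisting weight `∏_{1 ≤ j < i ≤ n} q_{ij}^{u_i v_j}` (natural exponents), so that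
`x^u · x^v = weight u v · x^{u+v}` in `R`. -/
def weight (u v : Fin n →₀ ℕ) : k :=
  ∏ i : Fin n, ∏ j : Fin n, if j < i then Q.q i j ^ (u i * v j) else 1

/-- The twisting weight `∏_{1 ≤ j < i ≤ n} q_{ij}^{u_i v_j}` (integer exponents), so that
`x^u · x^v = zweight u v · x^{u+v}` in `L`. -/
def zweight (u v : Fin n → ℤ) : k :=
  ∏ i : Fin n, ∏ j : Fin n, if j < i then Q.q i j ^ (u i * v j) else 1

/-- The alternating bicharacter `σ(s,t) = ∏_{i,j} q_{ij}^{s_i t_j}`, so that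
`x^s x^t = σ(s,t) x^t x^s` in `L`. -/
def sigma (s t : Fin n → ℤ) : k :=
  ∏ i : Fin n, ∏ j : Fin n, Q.q i j ^ (s i * t j)

end QMatrix

/-- `R` is (a model of) the `q`-commutative power series ring `k_q[[x_1, …, x_n]]`:
its underlying `k`-vector space is that of all families of coefficients indexed by `ℕ^n`,
the constant series `1` is the multiplicative unit, and multiplication is given by the
twisted convolution: the coefficient of `x^s` in `f·g` is
`∑_{u+v=s} f_u g_v ∏_{1≤j<i≤n} q_{ij}^{u_i v_j}`. -/
structure IsQPowerSeriesRing {k : Type*} [Field k] {n : ℕ} (Q : QMatrix k n)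
    (R : Type*) [Ring R] [Algebra k R] where
  coeff : R ≃ₗ[k] ((Fin n →₀ ℕ) → k)
  coeff_one : ∀ s, coeff 1 s = if s = 0 then 1 else 0
  coeff_mul : ∀ f g : R, ∀ s, coeff (f * g) s =
    ∑ uv ∈ Finset.HasAntidiagonal.antidiagonal s, coeff f uv.1 * coeff g uv.2 * Q.weight uv.1 uv.2

namespace IsQPowerSeriesRing

variable {k : Type*} [Field k] {n : ℕ} {Q : QMatrix k n}
variable {R : Type*} [Ring R] [Algebra k R] (h : IsQPowerSeriesRing Q R)

/-- The monic monomial `x^s` of `R`. -/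
def mono (s : Fin n →₀ ℕ) : R :=
  h.coeff.symm (fun t => if t = s then 1 else 0)

/-- The variable `x_i` of `R`. -/
def X (i : Fin n) : R := h.mono (Finsupp.single i 1)

/-- The augmentation ideal `J = ⟨x_1, …, x_n⟩` of `R`, as a two-sided ideal. -/
def Jideal : TwoSidedIdeal R := TwoSidedIdeal.span (Set.range h.X)

/-- For `w ⊆ {1,…,n}`, the two-sided ideal `J_w = ⟨x_i : i ∈ w⟩` of `R`. -/
def Jw (w : Finset (Fin n)) : TwoSidedIdeal R :=
  TwoSidedIdeal.span {r : R | ∃ i ∈ w, r = h.X i}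

/-- The action of `θ ∈ H = (kˣ)^n` on `R`, determined by
`x^s ↦ θ_1^{s_1} ⋯ θ_n^{s_n} x^s` and applied coefficientwise to series. -/
def hAct (θ : Fin n → kˣ) (f : R) : R :=
  h.coeff.symm (fun s => (∏ i, (θ i : k) ^ (s i)) * h.coeff f s)

/-- A two-sided ideal of `R` is `H`-stable if it is mapped to itself by every element
of the torus `H = (kˣ)^n`. -/
def IsHStable (I : TwoSidedIdeal R) : Prop :=
  ∀ θ : Fin n → kˣ, h.hAct θ '' (I : Set R) = (I : Set R)

end IsQPowerSeriesRing

/-- A coefficient family `c : ℤ^n → k` is Laurent-bounded if `c s = 0` whenever some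
coordinate of `s` is sufficiently negative, i.e. `∃ N, min(s_1,…,s_n) < -N → c s = 0`. -/
def LaurentBounded {k : Type*} [Field k] {n : ℕ} (c : (Fin n → ℤ) → k) : Prop :=
  ∃ N : ℕ, ∀ s : Fin n → ℤ, (∃ i, s i < -(N : ℤ)) → c s = 0

/-- `L` is (a model of) the `q`-commutative Laurent series ring
`k_q[[x_1^{±1}, …, x_n^{±1}]]`: its elements correspond, `k`-linearly, to the
Laurent-bounded coefficient families indexed by `ℤ^n`, the constant series `1` is the
multiplicative unit, and multiplication is given by the twisted convolution. -/
structure IsQLaurentSeriesRing {k : Type*} [Field k] {n : ℕ} (Q : QMatrix k n)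
    (L : Type*) [Ring L] [Algebra k L] where
  coeff : L →ₗ[k] ((Fin n → ℤ) → k)
  coeff_injective : Function.Injective coeff
  coeff_bounded : ∀ f, LaurentBounded (coeff f)
  coeff_surjective : ∀ c, LaurentBounded c → ∃ f, coeff f = c
  coeff_one : ∀ s, coeff 1 s = if s = 0 then 1 else 0
  mul_support_finite : ∀ f g : L, ∀ s : Fin n → ℤ,
    (Function.support fun u => coeff f u * coeff g (s - u) * Q.zweight u (s - u)).Finite
  coeff_mul : ∀ f g : L, ∀ s : Fin n → ℤ, coeff (f * g) s =
    ∑ᶠ u : Fin n → ℤ, coeff f u * coeff g (s - u) * Q.zweight u (s - u)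

namespace IsQLaurentSeriesRing

variable {k : Type*} [Field k] {n : ℕ} {Q : QMatrix k n}
variable {L : Type*} [Ring L] [Algebra k L] (h : IsQLaurentSeriesRing Q L)

/-- The action of `θ ∈ H = (kˣ)^n` on `L`, determined by
`x^s ↦ θ_1^{s_1} ⋯ θ_n^{s_n} x^s` and applied coefficientwise to series. -/
def hAct (θ : Fin n → kˣ) (f : L) : L :=
  Classical.choose (h.coeff_surjective
    (fun s => (∏ i, ((θ i ^ (s i) : kˣ) : k)) * h.coeff f s)
    (by
      obtain ⟨N, hN⟩ := h.coeff_bounded f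
      exact ⟨N, fun s hs => by simp only []; rw [hN s hs, mul_zero]⟩))

/-- A two-sided ideal of `L` is `H`-stable if it is mapped to itself by every element
of the torus `H = (kˣ)^n`. -/
def IsHStable (I : TwoSidedIdeal L) : Prop :=
  ∀ θ : Fin n → kˣ, h.hAct θ '' (I : Set L) = (I : Set L)

end IsQLaurentSeriesRing

/-- A two-sided ideal `P` of a (possibly noncommutative) ring `A` is prime if `P ≠ A`
and whenever `I, J` are two-sided ideals with `IJ ⊆ P`, then `I ⊆ P` or `J ⊆ P`. -/
def IsPrimeTwoSided {A : Type*} [Ring A] (P : TwoSidedIdeal A) : Prop :=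
  P ≠ ⊤ ∧ ∀ I J : TwoSidedIdeal A, (∀ a ∈ I, ∀ b ∈ J, a * b ∈ P) → I ≤ P ∨ J ≤ P

/-!
Let `S ⊆ ℕ^n` be the set of exponents occurring in elements of `I` and `F` its set of minimal
elements, finite by Dickson's lemma. As `k` is infinite, the characters `s ↦ θ^s` of the torus
separate the points of `ℕ^n`, and multiplying coefficients by any element of the algebra they
generate preserves `I`; so for every `m ∈ F` some `g_m ∈ I` has coefficient `δ_{m m'}` at each
`m' ∈ F`. Dividing by the monomials `x^{m'}` writes `g = A x` with `A` an `F × F` matrix over `R`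
whose constant term is the identity. Such a matrix has a left inverse, so every `x^m` with
`m ∈ F` lies in `I`, hence so does every monomial above `F`; and every element of `I` is a
combination of the `x^m`, `m ∈ F`.
-/

open Finset

lemma TwoSidedIdeal.algebra_smul_mem {k R : Type*} [CommSemiring k] [Ring R] [Algebra k R]
    (I : TwoSidedIdeal R) (c : k) {f : R} (hf : f ∈ I) : c • f ∈ I := by
  rw [Algebra.smul_def]
  exact I.mul_mem_left _ _ hf

lemma Subalgebra.exists_eq_one_eq_zero_of_separatesPoints {k X : Type*} [Field k]
    (A : Subalgebra k (X → k)) (hA : (A : Set (X → k)).SeparatesPoints) (x : X) (T : Finset X) :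
    ∃ φ ∈ A, φ x = 1 ∧ ∀ y ∈ T, y ≠ x → φ y = 0 := by
  classical
  induction T using Finset.induction with
  | empty => exact ⟨1, A.one_mem, rfl, by simp⟩
  | insert y T _ ih =>
    obtain ⟨φ, hφA, hφx, hφT⟩ := ih
    by_cases hyx : y = x
    · exact ⟨φ, hφA, hφx, fun z hz hzx => hφT z ((mem_insert.1 hz).resolve_left (hyx ▸ hzx)) hzx⟩
    obtain ⟨ψ, hψA, hψ⟩ := hA (Ne.symm hyx)
    let χ : X → k := (ψ - algebraMap k _ (ψ y)) * algebraMap k _ (ψ x - ψ y)⁻¹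
    have hχA : χ ∈ A :=
      A.mul_mem (A.sub_mem hψA (A.algebraMap_mem _)) (A.algebraMap_mem _)
    refine ⟨φ * χ, A.mul_mem hφA hχA, ?_, fun z hz hzx => ?_⟩
    · simp [χ, hφx, sub_ne_zero.2 hψ]
    · rcases mem_insert.1 hz with rfl | hzT
      · simp [χ]
      · simp [hφT z hzT hzx]

lemma Infinite.exists_unit_pow_ne_pow (k : Type*) [Field k] [Infinite k] {a b : ℕ} (hab : a ≠ b) :
    ∃ u : kˣ, (u : k) ^ a ≠ (u : k) ^ b := by
  classical
  wlog hlt : a < b generalizing a b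
  · obtain ⟨u, hu⟩ := this hab.symm (lt_of_le_of_ne (not_lt.1 hlt) hab.symm)
    exact ⟨u, hu.symm⟩
  obtain ⟨u, hu⟩ :=
    Infinite.exists_notMem_finset (insert 0 (Polynomial.nthRoots (b - a) (1 : k)).toFinset)
  rw [mem_insert, Multiset.mem_toFinset, Polynomial.mem_nthRoots (by omega), not_or] at hu
  refine ⟨Units.mk0 u hu.1, fun hpow => hu.2 ?_⟩
  rw [Units.val_mk0, ← Nat.add_sub_cancel' hlt.le, pow_add] at hpow
  exact (mul_right_eq_self₀.1 hpow.symm).resolve_right (pow_ne_zero _ hu.1)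

namespace QMatrix

variable {k : Type*} [Field k] {n : ℕ} (Q : QMatrix k n)

lemma weight_ne_zero (u v : Fin n →₀ ℕ) : Q.weight u v ≠ 0 :=
  prod_ne_zero_iff.2 fun i _ => prod_ne_zero_iff.2 fun j _ => by
    split_ifs
    · exact pow_ne_zero _ (Q.q_ne_zero i j)
    · exact one_ne_zero

@[simp]
lemma weight_zero_left (v : Fin n →₀ ℕ) : Q.weight 0 v = 1 := by
  simp [weight]

@[simp]
lemma weight_zero_right (u : Fin n →₀ ℕ) : Q.weight u 0 = 1 := by
  simp [weight]

variable {M : Type*} [Ring M] [Algebra k M]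

/-- The coefficients of the left inverse of `∑ a_v x^v`, for the product twisted by `Q`,
when `a 0 = 1`. -/
def convLeftInv (a : (Fin n →₀ ℕ) → M) (v : Fin n →₀ ℕ) : M :=
  (if v = 0 then 1 else 0) -
    ∑ pq ∈ {pq ∈ antidiagonal v | pq.2 ≠ 0}.attach,
      Q.weight pq.1.1 pq.1.2 • (convLeftInv a pq.1.1 * a pq.1.2)
termination_by v.degree
decreasing_by
  obtain ⟨hsum, hq⟩ := mem_filter.1 pq.2
  rw [HasAntidiagonal.mem_antidiagonal] at hsum
  have hdeg := congrArg Finsupp.degree hsum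
  rw [map_add] at hdeg
  have hq' : pq.1.2.degree ≠ 0 := by rwa [Ne, Finsupp.degree_eq_zero_iff]
  omega

lemma sum_antidiagonal_convLeftInv_mul {a : (Fin n →₀ ℕ) → M} (ha : a 0 = 1)
    (v : Fin n →₀ ℕ) :
    ∑ pq ∈ antidiagonal v, Q.weight pq.1 pq.2 • (Q.convLeftInv a pq.1 * a pq.2) =
      if v = 0 then 1 else 0 := by
  have hdiag : {pq ∈ antidiagonal v | pq.2 = 0} = {(v, 0)} := by
    rw [HasAntidiagonal.filter_snd_eq_antidiagonal v 0, if_pos zero_le, tsub_zero]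
  have hrec : Q.convLeftInv a v = (if v = 0 then 1 else 0) - ∑ pq ∈ antidiagonal v with pq.2 ≠ 0,
      Q.weight pq.1 pq.2 • (Q.convLeftInv a pq.1 * a pq.2) := by
    have hdef := convLeftInv.eq_def Q a v
    rwa [sum_attach _ fun pq : (Fin n →₀ ℕ) × (Fin n →₀ ℕ) =>
      Q.weight pq.1 pq.2 • (Q.convLeftInv a pq.1 * a pq.2)] at hdef
  rw [← sum_filter_add_sum_filter_not _ (fun pq => pq.2 = 0), hdiag, sum_singleton,
    weight_zero_right, one_smul, ha, mul_one, hrec]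
  exact sub_add_cancel _ _

end QMatrix

namespace IsQPowerSeriesRing

variable {k : Type*} [Field k] {n : ℕ} {Q : QMatrix k n}
variable {R : Type*} [Ring R] [Algebra k R] (h : IsQPowerSeriesRing Q R)

lemma coeff_mono (s t : Fin n →₀ ℕ) : h.coeff (h.mono s) t = if t = s then 1 else 0 := by
  simp [mono]

lemma coeff_mul_mono (f : R) (v t : Fin n →₀ ℕ) :
    h.coeff (f * h.mono v) t = if v ≤ t then h.coeff f (t - v) * Q.weight (t - v) v else 0 := by
  have hsupp : ∀ pq ∈ antidiagonal t,
      h.coeff f pq.1 * h.coeff (h.mono v) pq.2 * Q.weight pq.1 pq.2 ≠ 0 → pq.2 = v := by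
    intro pq _ hne
    by_contra hpq
    simp [coeff_mono, hpq] at hne
  rw [h.coeff_mul, ← sum_filter_of_ne hsupp, HasAntidiagonal.filter_snd_eq_antidiagonal t v]
  split_ifs <;> simp [coeff_mono]

lemma mono_mul_mono (u v : Fin n →₀ ℕ) :
    h.mono u * h.mono v = Q.weight u v • h.mono (u + v) := by
  refine h.coeff.injective (funext fun t => ?_)
  rw [coeff_mul_mono, map_smul, Pi.smul_apply, coeff_mono, coeff_mono, smul_eq_mul]
  by_cases ht : t = u + v
  · simp [ht]
  · rw [if_neg ht, mul_zero]
    split_ifs with hv htu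
    · exact absurd (by rw [← htu, tsub_add_cancel_of_le hv]) ht
    · exact zero_mul _
    · rfl

lemma mono_mem_of_le {I : TwoSidedIdeal R} {s t : Fin n →₀ ℕ} (hs : h.mono s ∈ I) (hst : s ≤ t) :
    h.mono t ∈ I := by
  have hmul : (Q.weight s (t - s))⁻¹ • (h.mono s * h.mono (t - s)) ∈ I :=
    I.algebra_smul_mem _ (I.mul_mem_right _ _ hs)
  rwa [mono_mul_mono, add_tsub_cancel_of_le hst, smul_smul,
    inv_mul_cancel₀ (Q.weight_ne_zero _ _), one_smul] at hmul

def scale (φ : (Fin n →₀ ℕ) → k) (f : R) : R :=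
  h.coeff.symm (φ * h.coeff f)

@[simp]
lemma coeff_scale (φ : (Fin n →₀ ℕ) → k) (f : R) : h.coeff (h.scale φ f) = φ * h.coeff f := by
  simp [scale]

def multipliers (I : TwoSidedIdeal R) : Subalgebra k ((Fin n →₀ ℕ) → k) where
  carrier := {φ | ∀ f ∈ I, h.scale φ f ∈ I}
  mul_mem' {φ ψ} hφ hψ f hf := by
    have : h.scale (φ * ψ) f = h.scale φ (h.scale ψ f) :=
      h.coeff.injective (by simp [mul_assoc])
    exact this ▸ hφ _ (hψ f hf)
  add_mem' {φ ψ} hφ hψ f hf := by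
    have : h.scale (φ + ψ) f = h.scale φ f + h.scale ψ f :=
      h.coeff.injective (by simp [add_mul])
    exact this ▸ I.add_mem (hφ f hf) (hψ f hf)
  algebraMap_mem' c f hf := by
    have : h.scale (algebraMap k _ c) f = c • f := h.coeff.injective (by ext; simp)
    exact this ▸ I.algebra_smul_mem c hf

def character (θ : Fin n → kˣ) (s : Fin n →₀ ℕ) : k := ∏ i, (θ i : k) ^ s i

lemma character_mem_multipliers {I : TwoSidedIdeal R} (hI : h.IsHStable I) (θ : Fin n → kˣ) :
    character θ ∈ h.multipliers I := fun f hf => by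
  change h.hAct θ f ∈ (I : Set R)
  rw [← hI θ]
  exact ⟨f, hf, rfl⟩

lemma separatesPoints_multipliers [Infinite k] {I : TwoSidedIdeal R} (hI : h.IsHStable I) :
    (h.multipliers I : Set ((Fin n →₀ ℕ) → k)).SeparatesPoints := by
  intro s t hst
  obtain ⟨i, hi⟩ := Finsupp.ne_iff.1 hst
  obtain ⟨u, hu⟩ := Infinite.exists_unit_pow_ne_pow k hi
  refine ⟨_, h.character_mem_multipliers hI (Pi.mulSingle i u), ?_⟩
  simpa [character, Pi.mulSingle_apply, apply_ite] using hu

lemma exists_mem_coeff_eq_one_coeff_eq_zero [Infinite k] {I : TwoSidedIdeal R}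
    (hI : h.IsHStable I) {f : R} (hf : f ∈ I) {s : Fin n →₀ ℕ} (hs : h.coeff f s ≠ 0)
    (T : Finset (Fin n →₀ ℕ)) :
    ∃ g ∈ I, h.coeff g s = 1 ∧ ∀ t ∈ T, t ≠ s → h.coeff g t = 0 := by
  obtain ⟨φ, hφ, hφs, hφT⟩ :=
    Subalgebra.exists_eq_one_eq_zero_of_separatesPoints _ (h.separatesPoints_multipliers hI) s T
  refine ⟨(h.coeff f s)⁻¹ • h.scale φ f, I.algebra_smul_mem _ (hφ f hf), ?_, fun t ht hts => ?_⟩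
  · simp [hφs, hs]
  · simp [hφT t ht hts]

lemma exists_mul_eq_one_of_coeff_zero_eq_one {ι : Type*} [Fintype ι] [DecidableEq ι]
    (A : Matrix ι ι R) (hA : ∀ i j, h.coeff (A i j) 0 = (1 : Matrix ι ι k) i j) :
    ∃ B : Matrix ι ι R, B * A = 1 := by
  let a : (Fin n →₀ ℕ) → Matrix ι ι k := fun v => Matrix.of fun i j => h.coeff (A i j) v
  have ha : a 0 = 1 := Matrix.ext hA
  refine ⟨Matrix.of fun i j => h.coeff.symm fun v => Q.convLeftInv a v i j, ?_⟩
  ext i j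
  refine h.coeff.injective (funext fun v => ?_)
  have key := congrFun₂ (Q.sum_antidiagonal_convLeftInv_mul ha v) i j
  simp only [Matrix.sum_apply, Matrix.smul_apply, Matrix.mul_apply, smul_eq_mul] at key
  have hone : h.coeff ((1 : Matrix ι ι R) i j) v = (if v = 0 then 1 else 0 : Matrix ι ι k) i j := by
    by_cases hij : i = j <;> by_cases hv : v = 0 <;> simp [hij, hv, h.coeff_one, Matrix.one_apply]
  rw [hone, ← key, Matrix.mul_apply, map_sum, Finset.sum_apply]
  simp only [h.coeff_mul, mul_sum]
  rw [sum_comm]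
  refine sum_congr rfl fun pq _ => sum_congr rfl fun l _ => ?_
  simp only [a, Matrix.of_apply, LinearEquiv.apply_symm_apply]
  ring

lemma exists_eq_sum_mul_mono (F : Finset (Fin n →₀ ℕ))
    (hF : IsAntichain (· ≤ ·) (F : Set (Fin n →₀ ℕ))) (f : R)
    (hf : ∀ t, h.coeff f t ≠ 0 → ∃ m ∈ F, m ≤ t) :
    ∃ r : F → R, f = ∑ m : F, r m * h.mono m ∧ ∀ m : F, h.coeff (r m) 0 = h.coeff f m := by
  classical
  have hpick : ∀ t, ∃ p, (p ∈ F → p ≤ t) ∧ ((∃ m ∈ F, m ≤ t) → p ∈ F) := fun t => by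
    by_cases ht : ∃ m ∈ F, m ≤ t
    · obtain ⟨m, hm, hmt⟩ := ht
      exact ⟨m, fun _ => hmt, fun _ => hm⟩
    · exact ⟨t, fun _ => le_rfl, fun h' => absurd h' ht⟩
  choose pick hpick_le hpick_mem using hpick
  let r : F → R := fun m => h.coeff.symm fun v =>
    if pick (v + m) = m then h.coeff f (v + m) / Q.weight v m else 0
  have hr : ∀ (m : F) t, h.coeff (r m * h.mono m) t = if pick t = m then h.coeff f t else 0 := by
    intro m t
    rw [coeff_mul_mono]
    by_cases hmt : (m : Fin n →₀ ℕ) ≤ t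
    · simp [r, hmt, tsub_add_cancel_of_le hmt, Q.weight_ne_zero]
    · have : pick t ≠ m := fun hpm => hmt (hpm ▸ hpick_le t (hpm ▸ m.2))
      simp [hmt, this]
  refine ⟨r, h.coeff.injective (funext fun t => ?_), fun m => ?_⟩
  · rw [map_sum, Finset.sum_apply]
    simp only [hr]
    rw [sum_coe_sort F (fun m => if pick t = m then h.coeff f t else 0), sum_ite_eq]
    by_cases hft : h.coeff f t = 0
    · simp [hft]
    · rw [if_pos (hpick_mem t (hf t hft))]
  · have hm : pick m ∈ F := hpick_mem m ⟨m, m.2, le_rfl⟩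
    have hpm : pick m = m := hF.eq hm m.2 (hpick_le m hm)
    simp [r, hpm]

open Matrix in
lemma mono_mem_of_isHStable [Infinite k] {I : TwoSidedIdeal R} (hI : h.IsHStable I)
    (F : Finset (Fin n →₀ ℕ)) (hF : IsAntichain (· ≤ ·) (F : Set (Fin n →₀ ℕ)))
    (hFI : ∀ m ∈ F, ∃ f ∈ I, h.coeff f m ≠ 0)
    (hIF : ∀ f ∈ I, ∀ t, h.coeff f t ≠ 0 → ∃ m ∈ F, m ≤ t) {m : Fin n →₀ ℕ} (hm : m ∈ F) :
    h.mono m ∈ I := by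
  classical
  have hg : ∀ j : F, ∃ g ∈ I, ∀ i : F, h.coeff g i = (1 : Matrix F F k) j i := by
    intro j
    obtain ⟨f, hf, hfj⟩ := hFI j j.2
    obtain ⟨g, hgI, hgj, hgF⟩ := h.exists_mem_coeff_eq_one_coeff_eq_zero hI hf hfj F
    refine ⟨g, hgI, fun i => ?_⟩
    by_cases hji : j = i
    · subst hji
      simp [hgj]
    · rw [Matrix.one_apply_ne hji, hgF i i.2 fun hij => hji (Subtype.ext hij.symm)]
  choose g hgI hg1 using hg
  have hA : ∀ j, ∃ r : F → R, g j = ∑ i, r i * h.mono i ∧ ∀ i, h.coeff (r i) 0 = h.coeff (g j) i :=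
    fun j => h.exists_eq_sum_mul_mono F hF (g j) (hIF _ (hgI j))
  choose A hgA hA0 using hA
  obtain ⟨B, hBA⟩ := h.exists_mul_eq_one_of_coeff_zero_eq_one (Matrix.of A) fun j i => by
    rw [Matrix.of_apply, hA0, hg1]
  have hBg : B *ᵥ g = fun i : F => h.mono i := by
    have hg : g = Matrix.of A *ᵥ fun i : F => h.mono i := funext hgA
    rw [hg, Matrix.mulVec_mulVec, hBA, Matrix.one_mulVec]
  rw [show h.mono m = (B *ᵥ g) ⟨m, hm⟩ by rw [hBg]]
  exact sum_mem fun j _ => I.mul_mem_left _ _ (hgI j)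

end IsQPowerSeriesRing

theorem stmt_5_general {k : Type*} [Field k] [Infinite k] {n : ℕ} (Q : QMatrix k n)
    (R : Type*) [Ring R] [Algebra k R] (h : IsQPowerSeriesRing Q R)
    (I : TwoSidedIdeal R) (hIH : h.IsHStable I) :
    (∀ f ∈ I, ∀ s : Fin n →₀ ℕ, h.coeff f s ≠ 0 → h.mono s ∈ I) ∧
    I = TwoSidedIdeal.span {g : R | ∃ s : Fin n →₀ ℕ, g = h.mono s ∧ g ∈ I} := by
  classical
  set S : Set (Fin n →₀ ℕ) := {s | ∃ f ∈ I, h.coeff f s ≠ 0}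
  have hfin : {m | Minimal (· ∈ S) m}.Finite :=
    (setOfPred_minimal_antichain _).finite_of_partiallyWellOrderedOn
      ((Set.isPWO_of_wellQuasiOrderedLE S).mono (setOfPred_minimal_subset S))
  set F := hfin.toFinset
  have hF : IsAntichain (· ≤ ·) (F : Set (Fin n →₀ ℕ)) := by
    simpa [F] using setOfPred_minimal_antichain (· ∈ S)
  have hcover : ∀ f ∈ I, ∀ t, h.coeff f t ≠ 0 → ∃ m ∈ F, m ≤ t := fun f hf t ht => by
    obtain ⟨m, hmt, hm⟩ := exists_minimal_le_of_wellFoundedLT (· ∈ S) t ⟨f, hf, ht⟩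
    exact ⟨m, hfin.mem_toFinset.2 hm, hmt⟩
  have hmono : ∀ m ∈ F, h.mono m ∈ I := fun m hm =>
    h.mono_mem_of_isHStable hIH F hF (fun m hm => (hfin.mem_toFinset.1 hm).prop) hcover hm
  refine ⟨fun f hf s hs => ?_, le_antisymm (fun f hf => ?_) (TwoSidedIdeal.span_le.2 ?_)⟩
  · obtain ⟨m, hm, hms⟩ := hcover f hf s hs
    exact h.mono_mem_of_le (hmono m hm) hms
  · obtain ⟨r, rfl, -⟩ := h.exists_eq_sum_mul_mono F hF f (hcover f hf)
    exact sum_mem fun m _ =>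
      TwoSidedIdeal.mul_mem_left _ _ _ (TwoSidedIdeal.subset_span ⟨m, rfl, hmono m m.2⟩)
  · rintro g ⟨s, -, hg⟩
    exact hg

/-- Assume `k` is infinite. Every nonzero `H`-stable two-sided ideal
`I` of `R` is generated by monomials: every monomial `x^s` appearing with nonzero
coefficient in some element of `I` belongs to `I`, and `I` is generated as a two-sided
ideal of `R` by the set of monomials `x^s` (`s ∈ ℕ^n`) that it contains. -/
theorem stmt_5 {k : Type*} [Field k] [Infinite k] {n : ℕ} (hn : 0 < n) (Q : QMatrix k n)
    (R : Type*) [Ring R] [Algebra k R] (h : IsQPowerSeriesRing Q R)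
    (I : TwoSidedIdeal R) (hI0 : I ≠ ⊥) (hIH : h.IsHStable I) :
    (∀ f ∈ I, ∀ s : Fin n →₀ ℕ, h.coeff f s ≠ 0 → h.mono s ∈ I) ∧
    I = TwoSidedIdeal.span {g : R | ∃ s : Fin n →₀ ℕ, g = h.mono s ∧ g ∈ I} :=
  stmt_5_general Q R h I hIH
end
end

section
/- Assume k is infinite. Then the Jacobson radical of the q-commutative Laurent series ring L is zero. -/
/-!
Common setup: `q`-commutative power series ring `R = k_q[[x_1,…,x_n]]` and
`q`-commutative Laurent series ring `L = k_q[[x_1^{±1},…,x_n^{±1}]]`, characterized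
by their coefficient descriptions (twisted convolution multiplication).
-/

noncomputable section

/-!
The Jacobson radical of `L` is stable under the torus automorphisms `x^s ↦ θ^s x^s`. Multiplying
a nonzero element of it by a monomial and a scalar gives one with constant coefficient `1`. Its
coefficients vanish once some exponent is below `-B`, and because `k` is infinite a Vandermonde
combination of its torus translates kills the exponents in `[-B, -1]` in each coordinate while
keeping the constant coefficient. The result is a power series with constant term `1`, which has
a left inverse, so it cannot lie in the Jacobson radical of the nonzero ring `L`.
-/

namespace TwoSidedIdeal

variable {R S : Type*} [Ring R] [Ring S]

theorem map_mem_jacobson_bot {f : R →+* S} (hf : Function.Surjective f) {a : R}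
    (ha : a ∈ (⊥ : TwoSidedIdeal R).jacobson) : f a ∈ (⊥ : TwoSidedIdeal S).jacobson := by
  rw [mem_jacobson_iff] at ha ⊢
  intro y
  obtain ⟨y', rfl⟩ := hf y
  obtain ⟨z, hz⟩ := ha y'
  refine ⟨f z, ?_⟩
  rw [mem_bot] at hz ⊢
  rw [← map_mul, ← map_mul, ← map_add, ← map_one f, ← map_sub, hz, map_zero]

theorem notMem_jacobson_bot_of_mul_eq_one [Nontrivial R] {x z : R} (hzx : z * x = 1) :
    x ∉ (⊥ : TwoSidedIdeal R).jacobson := by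
  intro hx
  obtain ⟨w, hw⟩ := mem_jacobson_iff.mp hx (-z)
  rw [mem_bot, mul_assoc, neg_mul, hzx, mul_neg_one, neg_add_cancel, zero_sub, neg_eq_zero] at hw
  exact one_ne_zero hw

end TwoSidedIdeal

theorem infinite_units_of_infinite (G₀ : Type*) [GroupWithZero G₀] [Infinite G₀] :
    Infinite G₀ˣ :=
  have : Infinite {a : G₀ // a ≠ 0} := (Set.finite_singleton (0 : G₀)).infinite_compl.to_subtype
  Infinite.of_injective _ unitsEquivNeZero.symm.injective

theorem exists_sum_mul_zpow_eq_ite (k : Type*) [Field k] [Infinite k] (B : ℕ) :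
    ∃ (t : Fin (B + 1) → kˣ) (c : Fin (B + 1) → k), ∀ d : ℤ, -(B : ℤ) ≤ d → d ≤ 0 →
      ∑ j, c j * ((t j ^ d : kˣ) : k) = if d = 0 then 1 else 0 := by
  have := infinite_units_of_infinite k
  let t : Fin (B + 1) → kˣ := fun j => Infinite.natEmbedding kˣ j
  let x : Fin (B + 1) → k := fun j => t j
  have hx : Function.Injective x :=
    Units.val_injective.comp ((Infinite.natEmbedding kˣ).injective.comp Fin.val_injective)
  have hV : IsUnit (Matrix.vandermonde x) := by
    rw [Matrix.isUnit_iff_isUnit_det, isUnit_iff_ne_zero]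
    exact Matrix.det_vandermonde_ne_zero_iff.mpr hx
  -- `μ` solves the transposed Vandermonde system `∑ⱼ μⱼ xⱼ ^ e = δ_{e,B}`; shifting the
  -- exponent `e` by `-B` gives the claim.
  obtain ⟨μ, hμ⟩ : ∃ μ, Matrix.vecMul μ (Matrix.vandermonde x) = Pi.single (Fin.last B) 1 :=
    Matrix.vecMul_surjective_iff_isUnit.mpr hV _
  refine ⟨t, fun j => μ j * ((t j ^ B : kˣ) : k), fun d hBd hd0 => ?_⟩
  let e : Fin (B + 1) := ⟨(d + B).toNat, by omega⟩
  have hterm : ∀ j, μ j * ((t j ^ B : kˣ) : k) * ((t j ^ d : kˣ) : k)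
      = μ j * Matrix.vandermonde x j e := by
    intro j
    have hexp : (B : ℤ) + d = ((e : ℕ) : ℤ) := by simp only [e]; omega
    rw [Matrix.vandermonde_apply, mul_assoc, ← Units.val_mul, ← zpow_natCast, ← zpow_add, hexp,
      zpow_natCast, Units.val_pow_eq_pow_val]
  calc ∑ j, μ j * ((t j ^ B : kˣ) : k) * ((t j ^ d : kˣ) : k)
      = Matrix.vecMul μ (Matrix.vandermonde x) e := by
        simp only [hterm, Matrix.vecMul, dotProduct]
    _ = if d = 0 then 1 else 0 := by
        have he : e = Fin.last B ↔ d = 0 := by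
          rw [Fin.ext_iff, Fin.val_last]
          simp only [e]
          omega
        rw [hμ, Pi.single_apply, if_congr he rfl rfl]

namespace QMatrix

variable {k : Type*} [Field k] {n : ℕ} (Q : QMatrix k n)

theorem zweight_zero_right (u : Fin n → ℤ) : Q.zweight u 0 = 1 := by
  simp [zweight]

theorem zweight_ne_zero (u v : Fin n → ℤ) : Q.zweight u v ≠ 0 := by
  refine Finset.prod_ne_zero_iff.mpr fun i _ => Finset.prod_ne_zero_iff.mpr fun j _ => ?_
  split_ifs
  exacts [zpow_ne_zero _ (Q.q_ne_zero i j), one_ne_zero]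

/-- The coefficients of a left inverse of a series `G` supported in `ℕ^n` with `G 0 = 1`,
solved for by recursion on the total degree. -/
def leftInvCoeff (G : (Fin n → ℤ) → k) (s : Fin n → ℤ) : k :=
  (if s = 0 then 1 else 0) -
    ∑ u ∈ (Finset.Ico 0 s).attach, leftInvCoeff G u * G (s - u) * Q.zweight u (s - u)
termination_by (∑ i, s i).toNat
decreasing_by
  obtain ⟨hu0, hus⟩ := Finset.mem_Ico.mp u.2
  have hlt : ∑ i, u.1 i < ∑ i, s i := by
    obtain ⟨hle, i, hi⟩ := Pi.lt_def.mp hus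
    exact Finset.sum_lt_sum (fun i _ => hle i) ⟨i, Finset.mem_univ i, hi⟩
  have hnonneg : 0 ≤ ∑ i, u.1 i := Finset.sum_nonneg fun i _ => hu0 i
  omega

theorem leftInvCoeff_eq (G : (Fin n → ℤ) → k) (s : Fin n → ℤ) :
    Q.leftInvCoeff G s = (if s = 0 then 1 else 0) -
      ∑ u ∈ Finset.Ico 0 s, Q.leftInvCoeff G u * G (s - u) * Q.zweight u (s - u) := by
  rw [leftInvCoeff, Finset.sum_attach (Finset.Ico 0 s)
    (fun u => Q.leftInvCoeff G u * G (s - u) * Q.zweight u (s - u))]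

theorem leftInvCoeff_of_not_nonneg (G : (Fin n → ℤ) → k) {s : Fin n → ℤ} (hs : ¬0 ≤ s) :
    Q.leftInvCoeff G s = 0 := by
  have hs0 : s ≠ 0 := by rintro rfl; exact hs le_rfl
  have hIco : Finset.Ico 0 s = ∅ := Finset.Ico_eq_empty_iff.mpr fun h => hs h.le
  rw [leftInvCoeff_eq, hIco, if_neg hs0, Finset.sum_empty, sub_zero]

end QMatrix

theorem laurentBounded_single {k : Type*} [Field k] {n : ℕ} (w : Fin n → ℤ) (a : k) :
    LaurentBounded (Pi.single w a) := by
  refine ⟨∑ i, (w i).natAbs, fun s ⟨i, hi⟩ => ?_⟩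
  rw [Pi.single_apply, if_neg]
  rintro rfl
  have : (s i).natAbs ≤ ∑ j, (s j).natAbs :=
    Finset.single_le_sum (f := fun j => (s j).natAbs) (fun _ _ => Nat.zero_le _)
      (Finset.mem_univ i)
  omega

section torusChar

variable {k : Type*} [Field k] {n : ℕ}

def torusChar (θ : Fin n → kˣ) (s : Fin n → ℤ) : kˣ :=
  ∏ i, θ i ^ s i

theorem torusChar_zero (θ : Fin n → kˣ) : torusChar θ 0 = 1 := by
  simp [torusChar]

theorem torusChar_add (θ : Fin n → kˣ) (u v : Fin n → ℤ) :
    torusChar θ (u + v) = torusChar θ u * torusChar θ v := by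
  simp only [torusChar, Pi.add_apply, zpow_add, Finset.prod_mul_distrib]

theorem torusChar_inv (θ : Fin n → kˣ) (s : Fin n → ℤ) :
    torusChar θ⁻¹ s = (torusChar θ s)⁻¹ := by
  simp only [torusChar, Pi.inv_apply, inv_zpow, Finset.prod_inv_distrib]

end torusChar

namespace IsQLaurentSeriesRing

variable {k : Type*} [Field k] {n : ℕ} {Q : QMatrix k n}
variable {L : Type*} [Ring L] [Algebra k L]

theorem nontrivial (h : IsQLaurentSeriesRing Q L) : Nontrivial L :=
  ⟨⟨1, 0, fun h10 => by simpa [h10] using h.coeff_one 0⟩⟩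

theorem coeff_hAct (h : IsQLaurentSeriesRing Q L) (θ : Fin n → kˣ) (f : L) (s : Fin n → ℤ) :
    h.coeff (h.hAct θ f) s = torusChar θ s * h.coeff f s := by
  rw [torusChar, Units.coe_prod, hAct]
  exact congrFun (Classical.choose_spec (p := fun x => h.coeff x = _) _) s

def torusHom (h : IsQLaurentSeriesRing Q L) (θ : Fin n → kˣ) : L →+* L where
  toFun := h.hAct θ
  map_one' := h.coeff_injective <| funext fun s => by
    by_cases hs : s = 0
    · simp [coeff_hAct, h.coeff_one, hs, torusChar_zero]
    · simp [coeff_hAct, h.coeff_one, hs]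
  map_zero' := h.coeff_injective <| funext fun s => by simp [coeff_hAct]
  map_add' f g := h.coeff_injective <| funext fun s => by simp [coeff_hAct, mul_add]
  map_mul' f g := h.coeff_injective <| funext fun s => by
    simp only [h.coeff_mul, coeff_hAct, mul_finsum]
    refine finsum_congr fun u => ?_
    have hχ : (torusChar θ s : k) = torusChar θ u * torusChar θ (s - u) := by
      rw [← Units.val_mul, ← torusChar_add, add_sub_cancel]
    rw [hχ]
    ring

theorem torusHom_apply (h : IsQLaurentSeriesRing Q L) (θ : Fin n → kˣ) (f : L) :
    h.torusHom θ f = h.hAct θ f := rfl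

theorem torusHom_surjective (h : IsQLaurentSeriesRing Q L) (θ : Fin n → kˣ) :
    Function.Surjective (h.torusHom θ) := fun f =>
  ⟨h.hAct θ⁻¹ f, h.coeff_injective <| funext fun s => by
    rw [torusHom_apply, coeff_hAct, coeff_hAct, torusChar_inv, ← mul_assoc, ← Units.val_mul,
      mul_inv_cancel, Units.val_one, one_mul]⟩

theorem exists_mem_jacobson_coeff_zero_eq_one (h : IsQLaurentSeriesRing Q L) {a : L}
    (ha : a ∈ (⊥ : TwoSidedIdeal L).jacobson) (ha0 : a ≠ 0) :
    ∃ b ∈ (⊥ : TwoSidedIdeal L).jacobson, h.coeff b 0 = 1 := by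
  obtain ⟨s₀, hs₀⟩ : ∃ s₀, h.coeff a s₀ ≠ 0 := by
    by_contra! hzero
    exact ha0 (h.coeff_injective (by rw [map_zero]; exact funext hzero))
  obtain ⟨m, hm⟩ := h.coeff_surjective _ (laurentBounded_single (-s₀) (1 : k))
  have hma : h.coeff (m * a) 0 = h.coeff a s₀ * Q.zweight (-s₀) s₀ := by
    rw [h.coeff_mul, finsum_eq_single _ (-s₀) fun u hu => by simp [hm, hu]]
    simp [hm]
  refine ⟨(h.coeff (m * a) 0)⁻¹ • (m * a), ?_, ?_⟩
  · rw [Algebra.smul_def]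
    exact TwoSidedIdeal.mul_mem_left _ _ _ (TwoSidedIdeal.mul_mem_left _ _ _ ha)
  · rw [map_smul, Pi.smul_apply, smul_eq_mul,
      inv_mul_cancel₀ (hma ▸ mul_ne_zero hs₀ (Q.zweight_ne_zero _ _))]

theorem exists_mem_jacobson_coeff_eq_prod_sum_mul (h : IsQLaurentSeriesRing Q L) {b : L}
    (hb : b ∈ (⊥ : TwoSidedIdeal L).jacobson) {ι : Type*} [Fintype ι] (t : ι → kˣ)
    (c : ι → k) :
    ∃ b' ∈ (⊥ : TwoSidedIdeal L).jacobson, ∀ s,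
      h.coeff b' s = (∏ i, ∑ j, c j * ((t j ^ s i : kˣ) : k)) * h.coeff b s := by
  classical
  refine ⟨∑ J : Fin n → ι, (∏ i, c (J i)) • h.torusHom (fun i => t (J i)) b, ?_, fun s => ?_⟩
  · refine sum_mem fun J _ => ?_
    rw [Algebra.smul_def]
    exact TwoSidedIdeal.mul_mem_left _ _ _
      (TwoSidedIdeal.map_mem_jacobson_bot (h.torusHom_surjective _) hb)
  · simp only [map_sum, map_smul, Finset.sum_apply, Pi.smul_apply, smul_eq_mul, torusHom_apply,
      coeff_hAct, torusChar, Units.coe_prod, Fintype.prod_sum, Finset.sum_mul,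
      Finset.prod_mul_distrib]
    refine Finset.sum_congr rfl fun J _ => ?_
    ring

theorem exists_mem_jacobson_support_subset_nonneg [Infinite k] (h : IsQLaurentSeriesRing Q L)
    {b : L} (hb : b ∈ (⊥ : TwoSidedIdeal L).jacobson) (hb0 : h.coeff b 0 = 1) :
    ∃ g ∈ (⊥ : TwoSidedIdeal L).jacobson, h.coeff g 0 = 1 ∧
      Function.support (h.coeff g) ⊆ Set.Ici 0 := by
  obtain ⟨B, hB⟩ := h.coeff_bounded b
  obtain ⟨t, c, htc⟩ := exists_sum_mul_zpow_eq_ite k B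
  obtain ⟨g, hg, hcoeff⟩ := h.exists_mem_jacobson_coeff_eq_prod_sum_mul hb t c
  refine ⟨g, hg, ?_, fun s hs => ?_⟩
  · simp only [hcoeff, hb0, Pi.zero_apply, htc 0 (by omega) le_rfl, if_pos, Finset.prod_const_one,
      mul_one]
  · by_contra hneg
    obtain ⟨i, hi⟩ : ∃ i, s i < 0 := by simpa [Pi.le_def] using hneg
    refine hs ?_
    rw [hcoeff]
    by_cases hiB : s i < -(B : ℤ)
    · rw [hB s ⟨i, hiB⟩, mul_zero]
    · rw [Finset.prod_eq_zero (Finset.mem_univ i) (by rw [htc _ (by omega) hi.le, if_neg hi.ne]),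
        zero_mul]

theorem exists_mul_eq_one_of_support_subset_nonneg (h : IsQLaurentSeriesRing Q L) {g : L}
    (hg0 : h.coeff g 0 = 1) (hg : Function.support (h.coeff g) ⊆ Set.Ici 0) :
    ∃ z : L, z * g = 1 := by
  have hbdd : LaurentBounded (Q.leftInvCoeff (h.coeff g)) :=
    ⟨0, fun s ⟨i, hi⟩ => Q.leftInvCoeff_of_not_nonneg _ fun hs => (hs i).not_gt (by simpa)⟩
  obtain ⟨z, hz⟩ := h.coeff_surjective _ hbdd
  refine ⟨z, h.coeff_injective (funext fun s => ?_)⟩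
  have hsupp : Function.support
      (fun u => h.coeff z u * h.coeff g (s - u) * Q.zweight u (s - u)) ⊆ Finset.Icc 0 s := by
    intro u hu
    have hzu : h.coeff z u ≠ 0 := fun h0 => hu (by simp [h0])
    have hgu : h.coeff g (s - u) ≠ 0 := fun h0 => hu (by simp [h0])
    rw [hz] at hzu
    have hus : 0 ≤ s - u := hg hgu
    rw [Finset.coe_Icc]
    exact ⟨not_imp_comm.mp (Q.leftInvCoeff_of_not_nonneg _) hzu, sub_nonneg.mp hus⟩
  rw [h.coeff_mul, finsum_eq_sum_of_support_subset _ hsupp, h.coeff_one]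
  by_cases hs : 0 ≤ s
  · rw [← Finset.Ico_insert_right hs, Finset.sum_insert Finset.right_notMem_Ico, sub_self,
      hg0, Q.zweight_zero_right, mul_one, mul_one, hz, Q.leftInvCoeff_eq, sub_add_cancel]
  · have hs0 : s ≠ 0 := by rintro rfl; exact hs le_rfl
    rw [Finset.Icc_eq_empty hs, Finset.sum_empty, if_neg hs0]

end IsQLaurentSeriesRing

theorem stmt_8_general {k : Type*} [Field k] [Infinite k] {n : ℕ} (Q : QMatrix k n)
    (L : Type*) [Ring L] [Algebra k L] (h : IsQLaurentSeriesRing Q L) :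
    (⊥ : TwoSidedIdeal L).jacobson = ⊥ := by
  have := h.nontrivial
  refine eq_bot_iff.mpr fun a ha => (TwoSidedIdeal.mem_bot L).mpr ?_
  by_contra ha0
  obtain ⟨b, hb, hb0⟩ := h.exists_mem_jacobson_coeff_zero_eq_one ha ha0
  obtain ⟨g, hg, hg0, hgsupp⟩ := h.exists_mem_jacobson_support_subset_nonneg hb hb0
  obtain ⟨z, hzg⟩ := h.exists_mul_eq_one_of_support_subset_nonneg hg0 hgsupp
  exact TwoSidedIdeal.notMem_jacobson_bot_of_mul_eq_one hzg hg

/-- Assume `k` is infinite. Then the Jacobson radical of the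
`q`-commutative Laurent series ring `L` is zero. -/
theorem stmt_8 {k : Type*} [Field k] [Infinite k] {n : ℕ} (hn : 0 < n) (Q : QMatrix k n)
    (L : Type*) [Ring L] [Algebra k L] (h : IsQLaurentSeriesRing Q L) :
    (⊥ : TwoSidedIdeal L).jacobson = ⊥ :=
  stmt_8_general Q L h

end
end
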